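/- For any polynomial f of degree 3 on ℝⁿ, the polynomial (2|∇f|²Δf − ∇fᵗ∇|∇f|²)² has total degree at most 10 when the cubic part of f is x³ and the remaining terms have degree ≤ 2 with the coefficient structure f = x³ + f₂ + f₁; more precisely, its degree-8-and-higher part equals 6⁴(tr A)²x⁸ + (terms of the stated form divisible by suitable powers of x), where A is the symmetric matrix of the y-quadratic part of f₂. -/

import Mathlib

/-!
With `∂ᵢ = pderiv i`, expanding the gradient of `|∇f|²` gives
`Δ₁f = 2 ∑ᵢ ∑ⱼ ((∂ᵢf)² ∂ⱼ∂ⱼf − ∂ᵢf ∂ⱼf ∂ᵢ∂ⱼf)`, whose `i = j` terms vanish.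
If `f − x³` has degree at most 2, then `∂₀f = 3x² + (deg ≤ 1)`, the other first derivatives have
degree at most 1, and all second derivatives except `∂₀∂₀f` are constants. Counting degrees term
by term, only the terms `(∂₀f)² ∂ⱼ∂ⱼf` with `j ≠ 0` survive modulo polynomials of degree `≤ 3`, so
`Δ₁f ≡ 2 (Δ_y f) (∂₀f)² ≡ 18 (Δ_y f) x⁴`, where the constant `Δ_y f` equals `2 tr A` for `fcmc`.
Squaring, `p² − a² = (p − a)² + 2a(p − a)` moves the error from degree 3 to degree `3 + 4 = 7`.
-/

open MvPolynomial

/-- Squared norm of the gradient of a polynomial. -/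
noncomputable def gradSq {n : ℕ} (f : MvPolynomial (Fin n) ℝ) : MvPolynomial (Fin n) ℝ :=
  ∑ i, (pderiv i f) ^ 2

/-- Laplacian of a polynomial. -/
noncomputable def lap {n : ℕ} (f : MvPolynomial (Fin n) ℝ) : MvPolynomial (Fin n) ℝ :=
  ∑ i, pderiv i (pderiv i f)

/-- Δ₁ f = 2|∇f|²Δf − ∇fᵗ∇|∇f|². -/
noncomputable def delta1 {n : ℕ} (f : MvPolynomial (Fin n) ℝ) : MvPolynomial (Fin n) ℝ :=
  2 * gradSq f * lap f - ∑ i, pderiv i f * pderiv i (gradSq f)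

/-- The cubic f(x,y) = x³ + yᵗAy + k₀x² + (yᵗr)x + k₁x + yᵗs, with x = X 0
and y = (X 1, …, X m) in `MvPolynomial (Fin (m+1)) ℝ`. -/
noncomputable def fcmc (m : ℕ) (A : Matrix (Fin m) (Fin m) ℝ) (r s : Fin m → ℝ)
    (k₀ k₁ : ℝ) : MvPolynomial (Fin (m + 1)) ℝ :=
  X 0 ^ 3 + (∑ i, ∑ j, C (A i j) * X i.succ * X j.succ) + C k₀ * X 0 ^ 2
    + (∑ i, C (r i) * X i.succ) * X 0 + C k₁ * X 0 + ∑ i, C (s i) * X i.succ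

namespace MvPolynomial

section TotalDegree

variable {σ R : Type*} {d e : ℕ}

section CommSemiring

variable [CommSemiring R] {p q : MvPolynomial σ R}

theorem totalDegree_add_le_of_le (hp : p.totalDegree ≤ d) (hq : q.totalDegree ≤ d) :
    (p + q).totalDegree ≤ d :=
  (totalDegree_add p q).trans (max_le hp hq)

theorem totalDegree_mul_le_of_le (hp : p.totalDegree ≤ d) (hq : q.totalDegree ≤ e) :
    (p * q).totalDegree ≤ d + e :=
  (totalDegree_mul p q).trans (add_le_add hp hq)

theorem totalDegree_C_mul_le (a : R) (p : MvPolynomial σ R) :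
    (C a * p).totalDegree ≤ p.totalDegree := by
  rw [C_mul']
  exact totalDegree_smul_le _ _

theorem totalDegree_ofNat_mul_le (k : ℕ) [k.AtLeastTwo] (p : MvPolynomial σ R) :
    (OfNat.ofNat k * p).totalDegree ≤ p.totalDegree := by
  rw [← map_ofNat C]
  exact totalDegree_C_mul_le _ _

theorem totalDegree_pderiv_le (i : σ) (hp : p.totalDegree ≤ d + 1) :
    (pderiv i p).totalDegree ≤ d := by
  classical
  rw [p.as_sum, map_sum]
  refine totalDegree_finsetSum_le fun s hs => ?_
  rw [pderiv_monomial]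
  rcases Nat.eq_zero_or_pos (s i) with hi | hi
  · simp [hi]
  have hsplit : s - Finsupp.single i 1 + Finsupp.single i 1 = s :=
    tsub_add_cancel_of_le (Finsupp.single_le_iff.mpr hi)
  have hdeg : (s - Finsupp.single i 1).degree + 1 ≤ d + 1 := by
    have := congrArg Finsupp.degree hsplit
    rw [map_add, Finsupp.degree_single] at this
    exact this ▸ (le_totalDegree hs).trans hp
  exact (totalDegree_monomial_le _ _).trans (Nat.le_of_add_le_add_right hdeg)

end CommSemiring

section CommRing

variable [CommRing R] {p q : MvPolynomial σ R}

theorem totalDegree_sub_le_of_le (hp : p.totalDegree ≤ d) (hq : q.totalDegree ≤ d) :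
    (p - q).totalDegree ≤ d :=
  (totalDegree_sub p q).trans (max_le hp hq)

theorem totalDegree_sq_sub_sq_le {a : MvPolynomial σ R} (hpa : (p - a).totalDegree ≤ d)
    (ha : a.totalDegree ≤ e) (hde : d ≤ e) : (p ^ 2 - a ^ 2).totalDegree ≤ d + e := by
  have hcross : (a * (p - a)).totalDegree ≤ d + e := add_comm e d ▸ totalDegree_mul_le_of_le ha hpa
  rw [show p ^ 2 - a ^ 2 = (p - a) * (p - a) + (a * (p - a) + a * (p - a)) by ring]
  exact totalDegree_add_le_of_le ((totalDegree_mul_le_of_le hpa hpa).trans (by omega))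
    (totalDegree_add_le_of_le hcross hcross)

end CommRing

end TotalDegree

end MvPolynomial

theorem delta1_eq_sum {n : ℕ} (f : MvPolynomial (Fin n) ℝ) :
    delta1 f = 2 * ∑ i, ∑ j, (pderiv i f ^ 2 * pderiv j (pderiv j f)
      - pderiv i f * pderiv j f * pderiv i (pderiv j f)) := by
  have hlap : 2 * gradSq f * lap f = 2 * ∑ i, ∑ j, pderiv i f ^ 2 * pderiv j (pderiv j f) := by
    rw [gradSq, lap, mul_assoc, Finset.sum_mul_sum]
  have hgrad : ∑ i, pderiv i f * pderiv i (gradSq f)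
      = 2 * ∑ i, ∑ j, pderiv i f * pderiv j f * pderiv i (pderiv j f) := by
    simp only [gradSq, map_sum, pderiv_pow, Finset.mul_sum]
    refine Finset.sum_congr rfl fun i _ => Finset.sum_congr rfl fun j _ => ?_
    simp only [Nat.cast_ofNat, Nat.add_one_sub_one, pow_one]
    ring
  simp only [delta1, hlap, hgrad, ← mul_sub, ← Finset.sum_sub_distrib]

section CubicInX

variable {n : ℕ} {f : MvPolynomial (Fin (n + 1)) ℝ}

theorem totalDegree_pderiv_zero_sub_le (hf : (f - X 0 ^ 3).totalDegree ≤ 2) :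
    (pderiv 0 f - 3 * X 0 ^ 2).totalDegree ≤ 1 := by
  simpa [pderiv_pow] using totalDegree_pderiv_le 0 hf

theorem totalDegree_pderiv_succ_le (hf : (f - X 0 ^ 3).totalDegree ≤ 2) (k : Fin n) :
    (pderiv k.succ f).totalDegree ≤ 1 := by
  simpa [pderiv_pow, Fin.succ_ne_zero] using totalDegree_pderiv_le k.succ hf

theorem totalDegree_pderiv_le_two (hf : (f - X 0 ^ 3).totalDegree ≤ 2) (j : Fin (n + 1)) :
    (pderiv j f).totalDegree ≤ 2 := by
  cases j using Fin.cases with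
  | zero =>
    rw [← sub_add_cancel (pderiv 0 f) (3 * X 0 ^ 2)]
    exact totalDegree_add_le_of_le ((totalDegree_pderiv_zero_sub_le hf).trans one_le_two)
      ((totalDegree_ofNat_mul_le 3 _).trans (totalDegree_X_pow _ _).le)
  | succ k => exact (totalDegree_pderiv_succ_le hf k).trans one_le_two

theorem totalDegree_pderiv_succ_pderiv_le (hf : (f - X 0 ^ 3).totalDegree ≤ 2) (k : Fin n)
    (j : Fin (n + 1)) : (pderiv k.succ (pderiv j f)).totalDegree ≤ 0 := by
  cases j using Fin.cases with
  | zero =>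
    have h := totalDegree_pderiv_le k.succ (totalDegree_pderiv_zero_sub_le hf)
    rwa [map_sub, ← map_ofNat C 3, pderiv_C_mul, pderiv_pow,
      pderiv_X_of_ne (Fin.succ_ne_zero k).symm, mul_zero, mul_zero, sub_zero] at h
  | succ i => exact totalDegree_pderiv_le _ (totalDegree_pderiv_succ_le hf i)

theorem totalDegree_delta1_sub_le (hf : (f - X 0 ^ 3).totalDegree ≤ 2) :
    (delta1 f - 18 * (∑ k : Fin n, pderiv k.succ (pderiv k.succ f)) * X 0 ^ 4).totalDegree
      ≤ 3 := by
  set c := ∑ k : Fin n, pderiv k.succ (pderiv k.succ f)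
  set F := fun j => pderiv j f
  have hcross : ∑ k : Fin n,
      (F 0 ^ 2 * pderiv k.succ (F k.succ) - F 0 * F k.succ * pderiv 0 (F k.succ))
      = F 0 ^ 2 * c - ∑ k : Fin n, F 0 * F k.succ * pderiv 0 (F k.succ) := by
    rw [Finset.mul_sum, ← Finset.sum_sub_distrib]
  have hsplit : delta1 f - 18 * c * X 0 ^ 4
      = 2 * (∑ i : Fin n, ∑ j,
            (F i.succ ^ 2 * pderiv j (F j) - F i.succ * F j * pderiv i.succ (F j))
          - ∑ k : Fin n, F 0 * F k.succ * pderiv 0 (F k.succ))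
        + 2 * c * ((F 0 - 3 * X 0 ^ 2) * (F 0 + 3 * X 0 ^ 2)) := by
    rw [delta1_eq_sum, Fin.sum_univ_succ, Fin.sum_univ_succ, hcross]
    ring
  have hF := totalDegree_pderiv_le_two hf
  have hFsucc := totalDegree_pderiv_succ_le hf
  have hHsucc := totalDegree_pderiv_succ_pderiv_le hf
  have hX : (3 * X 0 ^ 2 : MvPolynomial (Fin (n + 1)) ℝ).totalDegree ≤ 2 :=
    (totalDegree_ofNat_mul_le 3 _).trans (totalDegree_X_pow _ _).le
  have hc : c.totalDegree ≤ 0 := totalDegree_finsetSum_le fun k _ => hHsucc k k.succ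
  have hsq (i : Fin n) : (F i.succ ^ 2).totalDegree ≤ 2 := by
    rw [sq]; exact totalDegree_mul_le_of_le (hFsucc i) (hFsucc i)
  rw [hsplit]
  refine totalDegree_add_le_of_le ((totalDegree_ofNat_mul_le 2 _).trans
    (totalDegree_sub_le_of_le (totalDegree_finsetSum_le fun i _ => totalDegree_finsetSum_le
      fun j _ => totalDegree_sub_le_of_le ?_ ?_) (totalDegree_finsetSum_le fun k _ => ?_))) ?_
  · exact totalDegree_mul_le_of_le (hsq i) (totalDegree_pderiv_le j (hF j))
  · exact totalDegree_mul_le_of_le (totalDegree_mul_le_of_le (hFsucc i) (hF j)) (hHsucc i j)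
  · exact totalDegree_mul_le_of_le (totalDegree_mul_le_of_le (hF 0) (hFsucc k))
      (totalDegree_pderiv_le 0 (hFsucc k))
  · rw [mul_assoc]
    exact (totalDegree_ofNat_mul_le 2 _).trans (totalDegree_mul_le_of_le hc
      (totalDegree_mul_le_of_le (totalDegree_pderiv_zero_sub_le hf)
        (totalDegree_add_le_of_le (hF 0) hX)))

end CubicInX

theorem totalDegree_fcmc_sub_X_pow_le (m : ℕ) (A : Matrix (Fin m) (Fin m) ℝ) (r s : Fin m → ℝ)
    (k₀ k₁ : ℝ) : (fcmc m A r s k₀ k₁ - X 0 ^ 3).totalDegree ≤ 2 := by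
  have hX (i : Fin (m + 1)) : (X i : MvPolynomial (Fin (m + 1)) ℝ).totalDegree ≤ 1 :=
    (totalDegree_X i).le
  have hCX (a : ℝ) (i : Fin (m + 1)) : (C a * X i).totalDegree ≤ 1 :=
    (totalDegree_C_mul_le a _).trans (hX i)
  have hlin (v : Fin m → ℝ) : (∑ i, C (v i) * X i.succ).totalDegree ≤ 1 :=
    totalDegree_finsetSum_le fun i _ => hCX _ _
  rw [fcmc, add_assoc, add_assoc, add_assoc, add_assoc, add_sub_cancel_left]
  refine totalDegree_add_le_of_le ?_ (totalDegree_add_le_of_le ?_ (totalDegree_add_le_of_le ?_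
    (totalDegree_add_le_of_le ?_ ((hlin s).trans one_le_two))))
  · exact totalDegree_finsetSum_le fun i _ => totalDegree_finsetSum_le fun j _ =>
      totalDegree_mul_le_of_le (hCX _ _) (hX _)
  · rw [sq, ← mul_assoc]; exact totalDegree_mul_le_of_le (hCX _ _) (hX _)
  · exact totalDegree_mul_le_of_le (hlin r) (hX _)
  · exact (hCX _ _).trans one_le_two

theorem sum_pderiv_succ_pderiv_succ_fcmc (m : ℕ) (A : Matrix (Fin m) (Fin m) ℝ) (r s : Fin m → ℝ)
    (k₀ k₁ : ℝ) :
    ∑ k : Fin m, pderiv k.succ (pderiv k.succ (fcmc m A r s k₀ k₁)) = C (2 * A.trace) := by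
  simp only [fcmc, map_add, Derivation.leibniz_pow, Nat.add_one_sub_one, pderiv_X, ne_eq,
    Fin.succ_ne_zero, not_false_eq_true, Pi.single_eq_of_ne', smul_eq_mul, mul_zero, nsmul_zero,
    map_sum, Derivation.leibniz, Pi.single_apply, Fin.succ_inj, mul_ite, mul_one, derivation_C,
    add_zero, Finset.sum_add_distrib, Finset.sum_ite_eq', Finset.mem_univ, ↓reduceIte,
    Finset.sum_ite_irrel, Finset.sum_const_zero, zero_add, pow_one, C_mul]
  rw [← map_sum, ← map_add, ← map_mul, Matrix.trace, two_mul]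
  rfl

theorem stmt_17_general (m : ℕ) (A : Matrix (Fin m) (Fin m) ℝ)
    (r s : Fin m → ℝ) (k₀ k₁ : ℝ) :
    ((delta1 (fcmc m A r s k₀ k₁)) ^ 2
      - C (6 ^ 4 * A.trace ^ 2) * X 0 ^ 8).totalDegree ≤ 7 := by
  have hΔ := totalDegree_delta1_sub_le (totalDegree_fcmc_sub_X_pow_le m A r s k₀ k₁)
  rw [sum_pderiv_succ_pderiv_succ_fcmc] at hΔ
  have hlead : C (6 ^ 4 * A.trace ^ 2) * X 0 ^ 8
      = (18 * C (2 * A.trace) * X 0 ^ 4 : MvPolynomial (Fin (m + 1)) ℝ) ^ 2 := by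
    simp only [map_mul, map_pow, map_ofNat]
    ring
  have hdeg : (18 * C (2 * A.trace) * X 0 ^ 4 : MvPolynomial (Fin (m + 1)) ℝ).totalDegree ≤ 4 := by
    rw [mul_assoc]
    exact (totalDegree_ofNat_mul_le 18 _).trans
      ((totalDegree_C_mul_le _ _).trans (totalDegree_X_pow _ _).le)
  rw [hlead]
  exact totalDegree_sq_sub_sq_le hΔ hdeg (by norm_num)

theorem stmt_17 (m : ℕ) (A : Matrix (Fin m) (Fin m) ℝ) (hA : A.IsSymm)
    (r s : Fin m → ℝ) (k₀ k₁ : ℝ) :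
    ((delta1 (fcmc m A r s k₀ k₁)) ^ 2
      - C (6 ^ 4 * A.trace ^ 2) * X 0 ^ 8).totalDegree ≤ 7 :=
  stmt_17_general m A r s k₀ k₁
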